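/- In Shamir secret sharing over a finite field F, for any κ-1 distinct nonzero evaluation points c₁,...,c_{κ-1} and any prescribed share values y₁,...,y_{κ-1}, and for any secret z ∈ F, there exists exactly one polynomial P of degree at most κ-1 with P(0) = z and P(cᵢ) = yᵢ for all i. Consequently, for a uniformly random choice of the κ-1 non-constant coefficients, any κ-1 shares at fixed distinct nonzero points are distributed uniformly and independently of the secret. -/
import Mathlib

open Polynomial

private lemma eval_helper {F : Type*} [Field F] (n : ℕ) (Q : Polynomial F)
    (h : Q.natDegree ≤ n) (x : F) :
    Q.eval x = Q.coeff 0 + ∑ j : Fin n, Q.coeff ((j : ℕ) + 1) * x ^ ((j : ℕ) + 1) := by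
  rw [Polynomial.eval_eq_sum_range' (Nat.lt_succ_of_le h), Finset.sum_range_succ',
    Fin.sum_univ_eq_sum_range (fun j => Q.coeff (j + 1) * x ^ (j + 1))]
  ring

private lemma coeff_g {F : Type*} [Field F] (n : ℕ) (a : Fin n → F) (z : F) (j : Fin n) :
    (Polynomial.C z + ∑ j' : Fin n, Polynomial.C (a j') * Polynomial.X ^ ((j' : ℕ) + 1)).coeff
      ((j : ℕ) + 1) = a j := by
  rw [Polynomial.coeff_add, Polynomial.coeff_C, Polynomial.finset_sum_coeff]
  simp only [Polynomial.coeff_C_mul, Polynomial.coeff_X_pow]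
  rw [Finset.sum_eq_single j]
  · simp
  · intro b _ hb
    have hne : ¬((j : ℕ) + 1 = (b : ℕ) + 1) := by
      simpa [eq_comm, Fin.val_injective.eq_iff] using hb
    rw [if_neg hne, mul_zero]
  · simp

private lemma natDegree_g {F : Type*} [Field F] (n : ℕ) (a : Fin n → F) (z : F) :
    (Polynomial.C z + ∑ j' : Fin n, Polynomial.C (a j') * Polynomial.X ^ ((j' : ℕ) + 1)).natDegree
      ≤ n := by
  refine (Polynomial.natDegree_add_le _ _).trans (max_le (by simp) ?_)
  refine (Polynomial.natDegree_sum_le _ _).trans ?_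
  rw [Finset.fold_max_le]
  refine ⟨Nat.zero_le _, fun j _ => ?_⟩
  refine (Polynomial.natDegree_C_mul_le _ _).trans ?_
  simp [Polynomial.natDegree_X_pow]

private lemma shamir_unique {F : Type*} [Field F] (n : ℕ)
    (c : Fin n → F) (hc0 : ∀ i, c i ≠ 0) (hc : Function.Injective c)
    (y : Fin n → F) (z : F) :
    ∃! P : Polynomial F, P.natDegree ≤ n ∧ P.eval 0 = z ∧ ∀ i, P.eval (c i) = y i := by
  classical
  set v : Option (Fin n) → F := fun o => o.elim 0 c with hv
  set r : Option (Fin n) → F := fun o => o.elim z y with hr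
  have hvinj : Set.InjOn v (Finset.univ : Finset (Option (Fin n))) := by
    intro o₁ _ o₂ _ h
    match o₁, o₂ with
    | none, none => rfl
    | none, some i => exact absurd h.symm (hc0 i)
    | some i, none => exact absurd h (hc0 i)
    | some i, some j => exact congrArg some (hc h)
  have hcard : (Finset.univ : Finset (Option (Fin n))).card = n + 1 := by simp
  have degkey : ∀ Q : Polynomial F, Q.natDegree ≤ n →
      Q.degree < ((Finset.univ : Finset (Option (Fin n))).card : ℕ) := by
    intro Q hQ
    rw [hcard]
    calc Q.degree ≤ (Q.natDegree : WithBot ℕ) := Polynomial.degree_le_natDegree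
      _ ≤ (n : WithBot ℕ) := by exact_mod_cast hQ
      _ < ((n + 1 : ℕ) : WithBot ℕ) := by exact_mod_cast Nat.lt_succ_self n
  refine ⟨Lagrange.interpolate Finset.univ v r, ⟨?_, ?_, ?_⟩, ?_⟩
  · by_cases h0 : Lagrange.interpolate Finset.univ v r = 0
    · simp [h0]
    · have hd := Lagrange.degree_interpolate_lt r hvinj
      rw [hcard] at hd
      exact Nat.lt_succ_iff.mp ((Polynomial.natDegree_lt_iff_degree_lt h0).mpr hd)
  · have := Lagrange.eval_interpolate_at_node r hvinj (Finset.mem_univ (none : Option (Fin n)))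
    simpa [hv, hr] using this
  · intro i
    have := Lagrange.eval_interpolate_at_node r hvinj (Finset.mem_univ (some i))
    simpa [hv, hr] using this
  · rintro Q ⟨hQd, hQ0, hQc⟩
    refine Lagrange.eq_interpolate_of_eval_eq r hvinj (degkey Q hQd) ?_
    rintro (_ | i) _
    · simpa [hv, hr] using hQ0
    · simpa [hv, hr] using hQc i

theorem shamir_share_privacy {F : Type*} [Field F] [Fintype F] (κ : ℕ) (hκ : 1 ≤ κ)
    (c : Fin (κ - 1) → F) (hc0 : ∀ i, c i ≠ 0) (hc : Function.Injective c)
    (y : Fin (κ - 1) → F) (z : F) :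
    (∃! P : Polynomial F, P.natDegree ≤ κ - 1 ∧ P.eval 0 = z ∧ ∀ i, P.eval (c i) = y i) ∧
    Function.Bijective (fun a : Fin (κ - 1) → F =>
      fun i : Fin (κ - 1) =>
        Polynomial.eval (c i)
          (Polynomial.C z + ∑ j : Fin (κ - 1), Polynomial.C (a j) * Polynomial.X ^ ((j : ℕ) + 1))) := by
  refine ⟨shamir_unique (κ - 1) c hc0 hc y z, ?_, ?_⟩
  · -- injective
    intro a b hab
    set ga := Polynomial.C z + ∑ j' : Fin (κ - 1), Polynomial.C (a j') * Polynomial.X ^ ((j' : ℕ) + 1)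
      with hga
    set gb := Polynomial.C z + ∑ j' : Fin (κ - 1), Polynomial.C (b j') * Polynomial.X ^ ((j' : ℕ) + 1)
      with hgb
    have huniq := shamir_unique (κ - 1) c hc0 hc (fun i => ga.eval (c i)) z
    have key : ga = gb := by
      have h1 : ga.natDegree ≤ κ - 1 ∧ ga.eval 0 = z ∧ ∀ i, ga.eval (c i) = ga.eval (c i) :=
        ⟨natDegree_g (κ - 1) a z, by simp [hga, Polynomial.eval_finset_sum], fun _ => rfl⟩
      have h2 : gb.natDegree ≤ κ - 1 ∧ gb.eval 0 = z ∧ ∀ i, gb.eval (c i) = ga.eval (c i) :=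
        ⟨natDegree_g (κ - 1) b z, by simp [hgb, Polynomial.eval_finset_sum],
          fun i => (congrFun hab i).symm⟩
      rw [huniq.unique h1 h2]
    funext j
    have hcj := congrArg (fun p => Polynomial.coeff p ((j : ℕ) + 1)) key
    simp only [hga, hgb, coeff_g] at hcj
    exact hcj
  · -- surjective
    intro w
    obtain ⟨P, ⟨hPd, hP0, hPc⟩, -⟩ := shamir_unique (κ - 1) c hc0 hc w z
    refine ⟨fun j => P.coeff ((j : ℕ) + 1), ?_⟩
    funext i
    have hz : P.coeff 0 = z := by rw [Polynomial.coeff_zero_eq_eval_zero, hP0]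
    simp only
    rw [Polynomial.eval_add, Polynomial.eval_C, Polynomial.eval_finset_sum]
    simp only [Polynomial.eval_mul, Polynomial.eval_C, Polynomial.eval_pow, Polynomial.eval_X]
    rw [← hz, ← eval_helper (κ - 1) P hPd (c i), hPc i]
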